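/- For each i ∈ {−1, 0, 1} and every real symmetric 2×2 matrix N, one has rᵢ N rᵢᵀ = N − B(N, αᵢ)·αᵢ; that is, the matrices r₋₁, r₀, r₁ acting by N ↦ A N Aᵀ realize the simple reflections of the Weyl group of F in the roots α₋₁, α₀, α₁. -/
import Mathlib


open Matrix

/-- The symmetric bilinear form on real 2×2 matrices. -/
def BR (N M : Matrix (Fin 2) (Fin 2) ℝ) : ℝ :=
  2 * N 0 1 * M 0 1 - N 0 0 * M 1 1 - M 0 0 * N 1 1

/-- The simple root `α₋₁` of `F` (over ℝ). -/
def αm : Matrix (Fin 2) (Fin 2) ℝ := !![1, 0; 0, -1]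

/-- The simple root `α₀` of `F` (over ℝ). -/
def α0 : Matrix (Fin 2) (Fin 2) ℝ := !![-1, -1; -1, 0]

/-- The simple root `α₁` of `F` (over ℝ). -/
def α1 : Matrix (Fin 2) (Fin 2) ℝ := !![0, 1; 1, 0]

/-- The matrix `r₋₁` representing the simple reflection in `α₋₁`. -/
def rm : Matrix (Fin 2) (Fin 2) ℝ := !![0, 1; 1, 0]

/-- The matrix `r₀` representing the simple reflection in `α₀`. -/
def r0 : Matrix (Fin 2) (Fin 2) ℝ := !![-1, 1; 0, 1]

/-- The matrix `r₁` representing the simple reflection in `α₁`. -/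
def r1 : Matrix (Fin 2) (Fin 2) ℝ := !![1, 0; 0, -1]

/-- For each `i ∈ {-1,0,1}` and every real symmetric 2×2 matrix `N`,
`rᵢ N rᵢᵀ = N - B(N,αᵢ)·αᵢ`: the matrices `r₋₁, r₀, r₁` acting by `N ↦ A N Aᵀ`
realize the simple reflections of the Weyl group of `F` in the roots `α₋₁, α₀, α₁`. -/
theorem stmt_2 :
    (∀ N : Matrix (Fin 2) (Fin 2) ℝ, N.IsSymm → rm * N * rmᵀ = N - BR N αm • αm) ∧
    (∀ N : Matrix (Fin 2) (Fin 2) ℝ, N.IsSymm → r0 * N * r0ᵀ = N - BR N α0 • α0) ∧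
    (∀ N : Matrix (Fin 2) (Fin 2) ℝ, N.IsSymm → r1 * N * r1ᵀ = N - BR N α1 • α1) := by

  have key : ∀ (A N α : Matrix (Fin 2) (Fin 2) ℝ), N 1 0 = N 0 1 →
      (∀ i j, (A * N * Aᵀ) i j = (N - BR N α • α) i j) →
      A * N * Aᵀ = N - BR N α • α := by
    intro A N α _ h
    ext i j
    exact h i j
  refine ⟨?_, ?_, ?_⟩ <;> intro N hN <;>
  have h10 : N 1 0 = N 0 1 := by
    have := congrFun (congrFun hN.eq 0) 1; simpa [Matrix.transpose_apply] using this
  all_goals {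
    ext i j
    fin_cases i <;> fin_cases j <;>
      simp [rm, r0, r1, αm, α0, α1, BR, Matrix.mul_apply, Fin.sum_univ_two,
        Matrix.transpose_apply, Matrix.vecMul, dotProduct, Matrix.vecHead,
        Matrix.vecTail, h10] <;> ring
  }
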